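/- Let Θ* be a symmetric positive definite d×d matrix, let Θ be a symmetric positive semidefinite d×d matrix with Θ ⪯ Θ*, and let H be a symmetric d×d matrix. Then ‖Θ^{1/2}HΘ^{1/2}‖ ≤ ‖(Θ*)^{1/2}H(Θ*)^{1/2}‖ and ‖Θ^{1/2}HΘ^{1/2}‖_F ≤ ‖(Θ*)^{1/2}H(Θ*)^{1/2}‖_F. -/

import Mathlib

/-!
Write `S = Θ^{1/2}`, `T = (Θ*)^{1/2}` and `C = S T⁻¹`, so that `S H S = C (T H T) Cᴴ`.
Since `SᴴS = Θ ⪯ Θ* = TᴴT`, we have `‖S x‖ ≤ ‖T x‖` for every `x`, hence `‖C y‖ ≤ ‖T T⁻¹ y‖ = ‖y‖`: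
`C` is a contraction. Both norms satisfy `‖C M Cᴴ‖ ≤ ‖C‖² ‖M‖`; for the Frobenius norm this
follows by applying `C` to the columns of `M` and of `(C M)ᴴ`.
-/

open Matrix

/-- The spectral norm of a square real matrix. -/
noncomputable def specNorm {d : ℕ} (M : Matrix (Fin d) (Fin d) ℝ) : ℝ :=
  ‖Matrix.toEuclideanCLM (𝕜 := ℝ) M‖

/-- The Frobenius norm of a square real matrix. -/
noncomputable def frobNorm {d : ℕ} (M : Matrix (Fin d) (Fin d) ℝ) : ℝ :=
  Real.sqrt (∑ i, ∑ j, (M i j)^2)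

/-- The positive semidefinite square root of a positive semidefinite matrix
(the definition `Matrix.PosSemidef.sqrt` of the older Mathlib, since removed). -/
noncomputable def Matrix.PosSemidef.sqrt {n 𝕜 : Type*} [Fintype n] [DecidableEq n] [RCLike 𝕜]
    [PartialOrder 𝕜]
    {A : Matrix n n 𝕜} (hA : A.PosSemidef) : Matrix n n 𝕜 :=
  hA.1.eigenvectorUnitary.1 * diagonal ((↑) ∘ (√·) ∘ hA.1.eigenvalues) *
    (star hA.1.eigenvectorUnitary : Matrix n n 𝕜)

open scoped Matrix.Norms.L2Operator ComplexOrder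

namespace Matrix

section Sqrt

variable {n : Type*} [Fintype n] [DecidableEq n]

lemma PosSemidef.posSemidef_sqrt {A : Matrix n n ℝ} (hA : A.PosSemidef) :
    hA.sqrt.PosSemidef := by
  unfold PosSemidef.sqrt
  refine PosSemidef.mul_mul_conjTranspose_same (posSemidef_diagonal_iff.mpr fun i => ?_) _
  simp [Real.sqrt_nonneg]

lemma PosSemidef.sqrt_mul_self {A : Matrix n n ℝ} (hA : A.PosSemidef) :
    hA.sqrt * hA.sqrt = A := by
  unfold PosSemidef.sqrt
  set U : Matrix n n ℝ := (hA.1.eigenvectorUnitary : Matrix n n ℝ)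
  have hU : star U * U = 1 := Unitary.coe_star_mul_self _
  conv_rhs => rw [hA.1.spectral_theorem, Unitary.conjStarAlgAut_apply]
  calc _ = U * (diagonal (RCLike.ofReal ∘ (√·) ∘ hA.1.eigenvalues) * (star U * U) *
          diagonal (RCLike.ofReal ∘ (√·) ∘ hA.1.eigenvalues)) * star U := by
        simp only [Matrix.mul_assoc]
    _ = _ := by
      rw [hU, Matrix.mul_one, diagonal_mul_diagonal]
      congr 3
      funext i
      simp [Real.mul_self_sqrt (hA.eigenvalues_nonneg i)]

lemma PosDef.isUnit_sqrt {A : Matrix n n ℝ} (hA : A.PosDef) : IsUnit hA.posSemidef.sqrt :=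
  isUnit_of_mul_isUnit_left (y := hA.posSemidef.sqrt) <| by
    rw [hA.posSemidef.sqrt_mul_self]
    exact hA.isUnit

end Sqrt

variable {𝕜 n : Type*} [RCLike 𝕜] [Fintype n] [DecidableEq n]

lemma norm_toEuclideanCLM_apply_sq (M : Matrix n n 𝕜) (x : EuclideanSpace 𝕜 n) :
    ‖toEuclideanCLM (𝕜 := 𝕜) M x‖ ^ 2 = RCLike.re (star x.ofLp ⬝ᵥ (Mᴴ * M) *ᵥ x.ofLp) := by
  rw [@norm_sq_eq_re_inner 𝕜, EuclideanSpace.inner_eq_star_dotProduct, ofLp_toEuclideanCLM,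
    ← mulVec_mulVec, dotProduct_mulVec, ← star_mulVec, dotProduct_comm]

lemma norm_toEuclideanCLM_apply_le_of_posSemidef_sub {A B : Matrix n n 𝕜}
    (h : (Bᴴ * B - Aᴴ * A).PosSemidef) (x : EuclideanSpace 𝕜 n) :
    ‖toEuclideanCLM (𝕜 := 𝕜) A x‖ ≤ ‖toEuclideanCLM (𝕜 := 𝕜) B x‖ := by
  have hre := (RCLike.nonneg_iff.mp (h.dotProduct_mulVec_nonneg x.ofLp)).1
  rw [sub_mulVec, dotProduct_sub, map_sub, sub_nonneg, ← norm_toEuclideanCLM_apply_sq,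
    ← norm_toEuclideanCLM_apply_sq] at hre
  exact (pow_le_pow_iff_left₀ (norm_nonneg _) (norm_nonneg _) two_ne_zero).mp hre

lemma l2_opNorm_mul_inv_le_one {A B : Matrix n n 𝕜} (h : (Bᴴ * B - Aᴴ * A).PosSemidef)
    (hB : IsUnit B) : ‖A * B⁻¹‖ ≤ 1 := by
  rw [cstar_norm_def]
  refine ContinuousLinearMap.opNorm_le_bound _ zero_le_one fun y => ?_
  calc ‖toEuclideanCLM (𝕜 := 𝕜) (A * B⁻¹) y‖
      ≤ ‖toEuclideanCLM (𝕜 := 𝕜) (B * B⁻¹) y‖ := by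
        rw [map_mul, map_mul]
        exact norm_toEuclideanCLM_apply_le_of_posSemidef_sub h _
    _ = 1 * ‖y‖ := by
        rw [mul_nonsing_inv _ ((isUnit_iff_isUnit_det B).mp hB), map_one, one_mul]
        rfl

lemma l2_opNorm_mul_mul_conjTranspose_le {C : Matrix n n 𝕜} (hC : ‖C‖ ≤ 1) (M : Matrix n n 𝕜) :
    ‖C * M * Cᴴ‖ ≤ ‖M‖ :=
  calc ‖C * M * Cᴴ‖ ≤ ‖C‖ * ‖M‖ * ‖Cᴴ‖ := norm_mul₃_le
    _ ≤ 1 * ‖M‖ * 1 := by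
      rw [l2_opNorm_conjTranspose]
      gcongr
    _ = ‖M‖ := by ring

end Matrix

section Frobenius

variable {d : ℕ}

lemma frobNorm_eq_sqrt_sum_norm_sq (M : Matrix (Fin d) (Fin d) ℝ) :
    frobNorm M = √(∑ j, ‖toEuclideanCLM (𝕜 := ℝ) M (EuclideanSpace.single j 1)‖ ^ 2) := by
  simp only [frobNorm, EuclideanSpace.real_norm_sq_eq]
  rw [Finset.sum_comm]
  simp [EuclideanSpace.single, mulVec_single]

lemma frobNorm_conjTranspose (M : Matrix (Fin d) (Fin d) ℝ) : frobNorm Mᴴ = frobNorm M := by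
  simp only [frobNorm, conjTranspose_apply, star_trivial]
  rw [Finset.sum_comm]

lemma frobNorm_mul_le (C M : Matrix (Fin d) (Fin d) ℝ) : frobNorm (C * M) ≤ ‖C‖ * frobNorm M := by
  rw [frobNorm_eq_sqrt_sum_norm_sq, frobNorm_eq_sqrt_sum_norm_sq, ← Real.sqrt_sq (norm_nonneg C),
    ← Real.sqrt_mul (sq_nonneg _), Finset.mul_sum]
  refine Real.sqrt_le_sqrt (Finset.sum_le_sum fun j _ => ?_)
  rw [← mul_pow, cstar_norm_def, map_mul]
  exact pow_le_pow_left₀ (norm_nonneg _)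
    ((toEuclideanCLM (𝕜 := ℝ) C).le_opNorm (toEuclideanCLM (𝕜 := ℝ) M _)) 2

lemma frobNorm_mul_mul_conjTranspose_le {C : Matrix (Fin d) (Fin d) ℝ} (hC : ‖C‖ ≤ 1)
    (M : Matrix (Fin d) (Fin d) ℝ) : frobNorm (C * M * Cᴴ) ≤ frobNorm M :=
  calc frobNorm (C * M * Cᴴ) = frobNorm (C * (C * Mᴴ)ᴴ) := by
        rw [conjTranspose_mul, conjTranspose_conjTranspose, Matrix.mul_assoc]
    _ ≤ ‖C‖ * (‖C‖ * frobNorm M) := by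
      grw [frobNorm_mul_le, frobNorm_conjTranspose, frobNorm_mul_le, frobNorm_conjTranspose]
    _ ≤ 1 * (1 * frobNorm M) := by
      have : 0 ≤ frobNorm M := Real.sqrt_nonneg _
      gcongr
    _ = frobNorm M := by ring

end Frobenius

theorem stmt14_general {d : ℕ} (Θs Θ H : Matrix (Fin d) (Fin d) ℝ) (hΘs : Θs.PosDef)
    (hΘ : Θ.PosSemidef) (hle : (Θs - Θ).PosSemidef) :
    specNorm (hΘ.sqrt * H * hΘ.sqrt) ≤
      specNorm (hΘs.posSemidef.sqrt * H * hΘs.posSemidef.sqrt) ∧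
    frobNorm (hΘ.sqrt * H * hΘ.sqrt) ≤
      frobNorm (hΘs.posSemidef.sqrt * H * hΘs.posSemidef.sqrt) := by
  set S := hΘ.sqrt
  set T := hΘs.posSemidef.sqrt
  have hS : Sᴴ = S := hΘ.posSemidef_sqrt.1
  have hT : Tᴴ = T := hΘs.posSemidef.posSemidef_sqrt.1
  have hTunit : IsUnit T := hΘs.isUnit_sqrt
  have hC : ‖S * T⁻¹‖ ≤ 1 := by
    refine Matrix.l2_opNorm_mul_inv_le_one ?_ hTunit
    rwa [hS, hT, hΘ.sqrt_mul_self, hΘs.posSemidef.sqrt_mul_self]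
  have hconj : S * H * S = S * T⁻¹ * (T * H * T) * (S * T⁻¹)ᴴ := by
    have hdet := (isUnit_iff_isUnit_det T).mp hTunit
    rw [conjTranspose_mul, conjTranspose_nonsing_inv, hS, hT]
    simp only [Matrix.mul_assoc, nonsing_inv_mul_cancel_left _ _ hdet,
      mul_nonsing_inv_cancel_left _ _ hdet]
  rw [hconj]
  exact ⟨Matrix.l2_opNorm_mul_mul_conjTranspose_le hC _, frobNorm_mul_mul_conjTranspose_le hC _⟩

theorem stmt14 {d : ℕ} (Θs Θ H : Matrix (Fin d) (Fin d) ℝ) (hΘs : Θs.PosDef)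
    (hΘ : Θ.PosSemidef) (hle : (Θs - Θ).PosSemidef) (hH : H.IsSymm) :
    specNorm (hΘ.sqrt * H * hΘ.sqrt) ≤
      specNorm (hΘs.posSemidef.sqrt * H * hΘs.posSemidef.sqrt) ∧
    frobNorm (hΘ.sqrt * H * hΘ.sqrt) ≤
      frobNorm (hΘs.posSemidef.sqrt * H * hΘs.posSemidef.sqrt) :=
  stmt14_general Θs Θ H hΘs hΘ hle
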